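/- arXiv:1603.01635 — 2 statements merged into one kernel-verified Lean document; each statement's English description precedes it below -/
import Mathlib

section
/- Correctness of Boolean expression compilation: let B be a Boolean expression, H a finite set of ancilla indices (all holding value false in state s), and i a target index, with vars(B), H, and {i} pairwise disjoint. Then the reversible circuit C = compile(B, i) produced by the recursive compiler satisfies (eval C s)(i) = s(i) XOR (eval B s). -/
inductive BExp where
  | bfalse : BExp
  | btrue : BExp
  | var (i : ℕ) : BExp
  | bxor (a b : BExp) : BExp
  | band (a b : BExp) : BExp

def BExp.eval : BExp → (ℕ → Bool) → Bool
  | .bfalse, _ => false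
  | .btrue, _ => true
  | .var i, s => s i
  | .bxor a b, s => xor (a.eval s) (b.eval s)
  | .band a b, s => (a.eval s) && (b.eval s)

def BExp.vars : BExp → Finset ℕ
  | .bfalse => ∅
  | .btrue => ∅
  | .var i => {i}
  | .bxor a b => a.vars ∪ b.vars
  | .band a b => a.vars ∪ b.vars

inductive Gate where
  | NOT (i : ℕ) : Gate
  | CNOT (i j : ℕ) : Gate
  | TOF (i j k : ℕ) : Gate

def applyGate : Gate → (ℕ → Bool) → (ℕ → Bool)
  | .NOT i, s => Function.update s i (! s i)
  | .CNOT i j, s => Function.update s j (xor (s i) (s j))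
  | .TOF i j k, s => Function.update s k (xor (s i && s j) (s k))

def evalCirc : List Gate → (ℕ → Bool) → (ℕ → Bool)
  | [], s => s
  | g :: C, s => evalCirc C (applyGate g s)

def Gate.target : Gate → ℕ
  | .NOT i => i
  | .CNOT _ j => j
  | .TOF _ _ k => k

def Gate.controls : Gate → Finset ℕ
  | .NOT _ => ∅
  | .CNOT i _ => {i}
  | .TOF i j _ => {i, j}

def Gate.wf : Gate → Prop
  | .NOT _ => True
  | .CNOT i j => i ≠ j
  | .TOF i j k => i ≠ j ∧ i ≠ k ∧ j ≠ k

def circWf (C : List Gate) : Prop := ∀ g ∈ C, g.wf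

def mods (C : List Gate) : Finset ℕ := (C.map Gate.target).toFinset

def controls (C : List Gate) : Finset ℕ := C.foldr (fun g A => g.controls ∪ A) ∅

def uncompute (C : List Gate) (A : Finset ℕ) : List Gate :=
  C.filter (fun g => g.target ∉ A)

/-- The ancilla heap is modeled as an infinite supply of available (zero-valued)
ancilla indices: `H n` is the `n`-th ancilla on the heap.  Popping the heap
returns `H 0` and the remaining heap `fun n => H (n+1)`. -/
def compileBExp : BExp → ℕ → (ℕ → ℕ) → List Gate × (ℕ → ℕ)
  | .bfalse, _, H => ([], H)
  | .btrue, i, H => ([.NOT i], H)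
  | .var j, i, H => ([.CNOT j i], H)
  | .bxor a b, i, H =>
    let r1 := compileBExp a i H
    let r2 := compileBExp b i r1.2
    (r1.1 ++ r2.1, r2.2)
  | .band a b, i, H =>
    let a1 := H 0
    let r1 := compileBExp a a1 (fun n => H (n+1))
    let a2 := r1.2 0
    let r2 := compileBExp b a2 (fun n => r1.2 (n+1))
    (r1.1 ++ r2.1 ++ [.TOF a1 a2 i], r2.2)

/-!
Compiling `B` consumes exactly the first `B.ancillaCount` cells of the heap and writes only to
the target and to those cells. Hence the heap handed on to a later subexpression is still clean,
and no variable of either operand is ever overwritten; correctness then follows by structural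
induction, a conjunction being read off its two fresh ancillas by the final Toffoli gate.
-/

lemma evalCirc_append (C₁ C₂ : List Gate) (s : ℕ → Bool) :
    evalCirc (C₁ ++ C₂) s = evalCirc C₂ (evalCirc C₁ s) := by
  induction C₁ generalizing s with
  | nil => rfl
  | cons g C ih => exact ih _

lemma applyGate_of_ne_target {g : Gate} {j : ℕ} (h : g.target ≠ j) (s : ℕ → Bool) :
    applyGate g s j = s j := by
  cases g <;> exact Function.update_of_ne h.symm _ _

lemma mods_append (C₁ C₂ : List Gate) : mods (C₁ ++ C₂) = mods C₁ ∪ mods C₂ := by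
  simp [mods, List.toFinset_append]

lemma evalCirc_of_notMem_mods {C : List Gate} {j : ℕ} (h : j ∉ mods C) (s : ℕ → Bool) :
    evalCirc C s j = s j := by
  induction C generalizing s with
  | nil => rfl
  | cons g C ih =>
    rw [← List.singleton_append, mods_append, Finset.notMem_union] at h
    rw [← List.singleton_append, evalCirc_append, ih h.2]
    exact applyGate_of_ne_target (by simpa [mods, eq_comm] using h.1) s

lemma BExp.eval_congr (B : BExp) {s t : ℕ → Bool} (h : ∀ j ∈ B.vars, s j = t j) :
    B.eval s = B.eval t := by
  induction B <;> simp_all [BExp.vars, BExp.eval]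

def BExp.ancillaCount : BExp → ℕ
  | .bfalse | .btrue | .var _ => 0
  | .bxor a b => a.ancillaCount + b.ancillaCount
  | .band a b => a.ancillaCount + b.ancillaCount + 2

lemma compileBExp_snd (B : BExp) (i : ℕ) (H : ℕ → ℕ) :
    (compileBExp B i H).2 = fun n => H (n + B.ancillaCount) := by
  induction B generalizing i H with
  | bfalse | btrue | var => rfl
  | bxor a b iha ihb =>
    simp only [compileBExp, BExp.ancillaCount, iha, ihb]
    ext n; congr 1; omega
  | band a b iha ihb =>
    simp only [compileBExp, BExp.ancillaCount, iha, ihb]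
    ext n; congr 1; omega

lemma mods_compileBExp_subset (B : BExp) (i : ℕ) (H : ℕ → ℕ) :
    mods (compileBExp B i H).1 ⊆ insert i ((Finset.range B.ancillaCount).image H) := by
  induction B generalizing i H with
  | bfalse => simp [compileBExp, mods]
  | btrue | var => simp [compileBExp, mods, Gate.target]
  | bxor a b iha ihb =>
    simp only [compileBExp, mods_append, compileBExp_snd, BExp.ancillaCount,
      Finset.union_subset_iff]
    refine ⟨(iha i H).trans ?_, (ihb i _).trans ?_⟩
    · grind
    · grind
  | band a b iha ihb =>
    simp only [compileBExp, mods_append, compileBExp_snd, BExp.ancillaCount,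
      Finset.union_subset_iff]
    refine ⟨⟨(iha _ _).trans ?_, (ihb _ _).trans ?_⟩, ?_⟩
    · grind
    · grind
    · simp [mods, Gate.target]

lemma evalCirc_compileBExp_of_ne {B : BExp} {i j : ℕ} {H : ℕ → ℕ} (hi : j ≠ i)
    (hH : ∀ m < B.ancillaCount, H m ≠ j) (s : ℕ → Bool) :
    evalCirc (compileBExp B i H).1 s j = s j := by
  refine evalCirc_of_notMem_mods (fun hj => ?_) s
  rcases Finset.mem_insert.1 (mods_compileBExp_subset B i H hj) with rfl | hj
  · exact hi rfl
  · obtain ⟨m, hm, rfl⟩ := Finset.mem_image.1 hj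
    exact hH m (Finset.mem_range.1 hm) rfl

def BExp.CompilesCorrectly (B : BExp) : Prop :=
  ∀ (i : ℕ) (H : ℕ → ℕ) (s : ℕ → Bool), Function.Injective H → (∀ n, H n ∉ B.vars) →
    (∀ n, H n ≠ i) → i ∉ B.vars → (∀ n, s (H n) = false) →
    evalCirc (compileBExp B i H).1 s i = xor (s i) (B.eval s)

lemma BExp.CompilesCorrectly.bxor {a b : BExp} (ha : a.CompilesCorrectly)
    (hb : b.CompilesCorrectly) : (a.bxor b).CompilesCorrectly := by
  intro i H s hinj hHB hHi hiB hzero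
  simp only [BExp.vars, Finset.mem_union, not_or] at hHB hiB
  set s₁ := evalCirc (compileBExp a i H).1 s
  have hs₁_eq : ∀ j, j ≠ i → (∀ m < a.ancillaCount, H m ≠ j) → s₁ j = s j :=
    fun j hi hH => evalCirc_compileBExp_of_ne hi hH s
  have hs₁_i : s₁ i = xor (s i) (a.eval s) :=
    ha i H s hinj (fun n => (hHB n).1) hHi hiB.1 hzero
  have hs₁_heap : ∀ n, s₁ (H (n + a.ancillaCount)) = false := fun n =>
    (hs₁_eq _ (hHi _) fun m hm => hinj.ne (by omega)).trans (hzero _)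
  have hb_eval : b.eval s₁ = b.eval s := b.eval_congr fun j hj =>
    hs₁_eq j (fun h => hiB.2 (h ▸ hj)) fun m _ h => (hHB m).2 (h ▸ hj)
  have hs₂_i := hb i (fun n => H (n + a.ancillaCount)) s₁ (hinj.comp (add_left_injective _))
    (fun n => (hHB _).2) (fun n => hHi _) hiB.2 hs₁_heap
  simp only [compileBExp, evalCirc_append, compileBExp_snd, BExp.eval]
  rw [hs₂_i, hb_eval, hs₁_i, Bool.xor_assoc]

lemma BExp.CompilesCorrectly.band {a b : BExp} (ha : a.CompilesCorrectly)
    (hb : b.CompilesCorrectly) : (a.band b).CompilesCorrectly := by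
  intro i H s hinj hHB hHi hiB hzero
  simp only [BExp.vars, Finset.mem_union, not_or] at hHB hiB
  simp only [compileBExp, evalCirc_append, compileBExp_snd, BExp.eval, zero_add]
  set s₁ := evalCirc (compileBExp a (H 0) fun n => H (n + 1)).1 s
  have hs₁_eq : ∀ j, H 0 ≠ j → (∀ m < a.ancillaCount, H (m + 1) ≠ j) → s₁ j = s j :=
    fun j h0 hH => evalCirc_compileBExp_of_ne (Ne.symm h0) hH s
  have hs₁_a : s₁ (H 0) = a.eval s := by
    have h := ha (H 0) (fun n => H (n + 1)) s (hinj.comp (add_left_injective 1))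
      (fun n => (hHB _).1) (fun n => hinj.ne (by omega)) (hHB 0).1 (fun n => hzero _)
    rwa [hzero, Bool.false_xor] at h
  have hs₁_heap : ∀ n, a.ancillaCount < n → s₁ (H n) = false := fun n hn =>
    (hs₁_eq _ (hinj.ne (by omega)) fun m hm => hinj.ne (by omega)).trans (hzero _)
  have hb_eval : b.eval s₁ = b.eval s := b.eval_congr fun j hj =>
    hs₁_eq j (fun h => (hHB 0).2 (h ▸ hj)) fun m _ h => (hHB _).2 (h ▸ hj)
  set s₂ := evalCirc
    (compileBExp b (H (a.ancillaCount + 1)) fun n => H (n + 1 + a.ancillaCount + 1)).1 s₁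
  have hs₂_eq : ∀ j, H (a.ancillaCount + 1) ≠ j →
      (∀ m < b.ancillaCount, H (m + 1 + a.ancillaCount + 1) ≠ j) → s₂ j = s₁ j :=
    fun j h0 hH => evalCirc_compileBExp_of_ne (Ne.symm h0) hH s₁
  have hs₂_b : s₂ (H (a.ancillaCount + 1)) = b.eval s := by
    have h := hb (H (a.ancillaCount + 1)) (fun n => H (n + 1 + a.ancillaCount + 1)) s₁
      (fun x y h => by have := hinj h; omega) (fun n => (hHB _).2)
      (fun n => hinj.ne (by omega)) (hHB _).2 (fun n => hs₁_heap _ (by omega))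
    rwa [hs₁_heap _ (by omega), hb_eval, Bool.false_xor] at h
  have hs₂_a : s₂ (H 0) = a.eval s :=
    (hs₂_eq _ (hinj.ne (by omega)) fun m _ => hinj.ne (by omega)).trans hs₁_a
  have hs₂_i : s₂ i = s i :=
    (hs₂_eq _ (hHi _) fun m _ => hHi _).trans (hs₁_eq _ (hHi _) fun m _ => hHi _)
  simp only [evalCirc, applyGate, Function.update_self, hs₂_a, hs₂_b, hs₂_i, Bool.xor_comm]

lemma BExp.compilesCorrectly (B : BExp) : B.CompilesCorrectly := by
  induction B with
  | bfalse => intro i H s; simp [compileBExp, evalCirc, BExp.eval]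
  | btrue => intro i H s; simp [compileBExp, evalCirc, applyGate, BExp.eval]
  | var j => intro i H s; simp [compileBExp, evalCirc, applyGate, BExp.eval, Bool.xor_comm]
  | bxor a b iha ihb => exact iha.bxor ihb
  | band a b iha ihb => exact iha.band ihb

theorem compile_bexp_correct (B : BExp) (i : ℕ) (H : ℕ → ℕ) (s : ℕ → Bool)
    (hinj : Function.Injective H)
    (hHB : ∀ n, H n ∉ B.vars) (hHi : ∀ n, H n ≠ i) (hiB : i ∉ B.vars)
    (hzero : ∀ n, s (H n) = false) :
    evalCirc (compileBExp B i H).1 s i = xor (s i) (B.eval s) :=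
  B.compilesCorrectly i H s hinj hHB hHi hiB hzero
end

section
/- The controls of a compiled circuit are contained in the variables of the expression and the popped ancillas: if C = compile(B, i) with ancilla heap H, then every control bit of C lies in vars(B) ∪ (ancillas popped from H); in particular, the target i is never used as a control. -/
/-
Compiling `B` pops exactly `B.ancillaCount` ancillas, so the heap left over is `H` shifted by
that count, and every control is a variable of `B` or one of the first `B.ancillaCount` heap
entries. For injective `H` these entries are exactly those no longer on the heap, and the target
`i` is neither a variable nor a heap entry.
-/

@[simp]
lemma controls_nil : controls [] = ∅ := rfl

@[simp]
lemma controls_cons (g : Gate) (C : List Gate) :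
    controls (g :: C) = g.controls ∪ controls C := rfl

@[simp]
lemma controls_append (C₁ C₂ : List Gate) :
    controls (C₁ ++ C₂) = controls C₁ ∪ controls C₂ := by
  induction C₁ with
  | nil => simp
  | cons g C ih => simp [ih, Finset.union_assoc]

lemma controls_compileBExp_subset (B : BExp) (i : ℕ) (H : ℕ → ℕ) :
    (↑(controls (compileBExp B i H).1) : Set ℕ) ⊆
      ↑B.vars ∪ H '' Set.Iio B.ancillaCount := by
  induction B generalizing i H with
  | bfalse | btrue => simp [compileBExp, Gate.controls]
  | var j => simp [compileBExp, Gate.controls, BExp.vars]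
  | bxor a b iha ihb =>
    intro x hx
    simp only [compileBExp, controls_append, Finset.coe_union, Set.mem_union] at hx
    rw [compileBExp_snd] at hx
    rcases hx with hx | hx
    · rcases iha i H hx with h | ⟨n, hn, rfl⟩
      · exact .inl (Finset.mem_union_left _ h)
      · exact .inr ⟨n, by simp only [BExp.ancillaCount, Set.mem_Iio] at hn ⊢; omega, rfl⟩
    · rcases ihb i _ hx with h | ⟨n, hn, rfl⟩
      · exact .inl (Finset.mem_union_right _ h)
      · refine .inr ⟨n + a.ancillaCount, ?_, rfl⟩
        simp only [BExp.ancillaCount, Set.mem_Iio] at hn ⊢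
        omega
  | band a b iha ihb =>
    intro x hx
    simp only [compileBExp, controls_append, Finset.coe_union, Set.mem_union] at hx
    rw [compileBExp_snd] at hx
    rcases hx with (hx | hx) | hx
    · rcases iha _ _ hx with h | ⟨n, hn, rfl⟩
      · exact .inl (Finset.mem_union_left _ h)
      · exact .inr ⟨n + 1, by simp only [BExp.ancillaCount, Set.mem_Iio] at hn ⊢; omega, rfl⟩
    · rcases ihb _ _ hx with h | ⟨n, hn, rfl⟩
      · exact .inl (Finset.mem_union_right _ h)
      · refine .inr ⟨n + 1 + a.ancillaCount + 1, ?_, rfl⟩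
        simp only [BExp.ancillaCount, Set.mem_Iio] at hn ⊢
        omega
    · simp only [controls_cons, Gate.controls, controls_nil, Finset.union_empty, Finset.coe_insert,
        Finset.coe_singleton, Set.mem_insert_iff, Set.mem_singleton_iff] at hx
      rcases hx with rfl | rfl
      · exact .inr ⟨0, by simp [BExp.ancillaCount], rfl⟩
      · refine .inr ⟨a.ancillaCount + 1, ?_, by simp⟩
        simp only [BExp.ancillaCount, Set.mem_Iio]
        omega

lemma Function.Injective.range_diff_range_add {α : Type*} {H : ℕ → α}
    (hH : Function.Injective H) (k : ℕ) :
    Set.range H \ Set.range (fun n => H (n + k)) = H '' Set.Iio k := by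
  ext x
  constructor
  · rintro ⟨⟨m, rfl⟩, hm⟩
    refine ⟨m, Set.mem_Iio.2 (not_le.1 fun hkm => hm ⟨m - k, ?_⟩), rfl⟩
    simp only [Nat.sub_add_cancel hkm]
  · rintro ⟨m, hm, rfl⟩
    refine ⟨⟨m, rfl⟩, fun ⟨n, hn⟩ => ?_⟩
    have := hH hn
    simp only [Set.mem_Iio] at hm
    omega

theorem compile_ctrls_general (B : BExp) (i : ℕ) (H : ℕ → ℕ)
    (hinj : Function.Injective H)
    (hHi : ∀ n, H n ≠ i) (hiB : i ∉ B.vars) :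
    (↑(controls (compileBExp B i H).1) : Set ℕ) ⊆
      ↑B.vars ∪ (Set.range H \ Set.range (compileBExp B i H).2) ∧
    i ∉ controls (compileBExp B i H).1 := by
  have hsub := controls_compileBExp_subset B i H
  rw [compileBExp_snd, hinj.range_diff_range_add]
  refine ⟨hsub, fun hi => ?_⟩
  obtain hiB' | ⟨n, -, hn⟩ := hsub hi
  · exact hiB hiB'
  · exact hHi n hn

theorem compile_ctrls (B : BExp) (i : ℕ) (H : ℕ → ℕ)
    (hinj : Function.Injective H)
    (hHB : ∀ n, H n ∉ B.vars) (hHi : ∀ n, H n ≠ i) (hiB : i ∉ B.vars) :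
    (↑(controls (compileBExp B i H).1) : Set ℕ) ⊆
      ↑B.vars ∪ (Set.range H \ Set.range (compileBExp B i H).2) ∧
    i ∉ controls (compileBExp B i H).1 :=
  compile_ctrls_general B i H hinj hHi hiB
end
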